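/- arXiv:1706.05941 — 2 statements merged into one kernel-verified Lean document; each statement's English description precedes it below -/
import Mathlib

section
/- Let m be a Maltsev operation on a finite set D, let R ⊆ Dⁿ be invariant under m, and fix i ∈ {1,…,n}. Define a ∼ b iff (i,a,b) ∈ Sig(R), where (i,a,b) ∈ Sig(R) means there exist t,t' ∈ R agreeing on the first i−1 coordinates with t[i] = a and t'[i] = b. Then ∼ is an equivalence relation on the projection pr_i(R) = {t[i] : t ∈ R}. -/
/-- `(i,a,b)` belongs to the signature of `R`. -/
def Sig {D : Type*} {n : ℕ} (R : Set (Fin n → D)) (i : Fin n) (a b : D) : Prop :=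
  ∃ t ∈ R, ∃ t' ∈ R, (∀ j, j < i → t j = t' j) ∧ t i = a ∧ t' i = b

/-- For `R` invariant under a Maltsev operation, the signature triples at coordinate `i`
define an equivalence relation on the projection `pr_i(R)`. -/
theorem stmt5 {D : Type*} [Fintype D] {n : ℕ} (m : D → D → D → D)
    (hm1 : ∀ x y, m x x y = y) (hm2 : ∀ x y, m x y y = x)
    (R : Set (Fin n → D))
    (hR : ∀ t1 t2 t3, t1 ∈ R → t2 ∈ R → t3 ∈ R →
      (fun c => m (t1 c) (t2 c) (t3 c)) ∈ R)
    (i : Fin n) :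
    (∀ a ∈ (fun t : Fin n → D => t i) '' R, Sig R i a a) ∧
    (∀ a b, Sig R i a b → Sig R i b a) ∧
    (∀ a b c, Sig R i a b → Sig R i b c → Sig R i a c) := by
  refine ⟨?_, ?_, ?_⟩
  · rintro a ⟨t, ht, rfl⟩
    exact ⟨t, ht, t, ht, fun j _ => rfl, rfl, rfl⟩
  · rintro a b ⟨t, ht, t', ht', hagree, rfl, rfl⟩
    refine ⟨fun c => m (t' c) (t c) (t c), hR t' t t ht' ht ht, t, ht,
      fun j hj => ?_, hm2 _ _, rfl⟩
    show m (t' j) (t j) (t j) = t j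
    rw [← hagree j hj, hm2]
  · rintro a b c ⟨t, ht, t', ht', hagree, rfl, rfl⟩ ⟨u, hu, u', hu', hagree', hub, rfl⟩
    refine ⟨t, ht, fun d => m (t' d) (u d) (u' d), hR t' u u' ht' hu hu',
      fun j hj => ?_, rfl, ?_⟩
    · show t j = m (t' j) (u j) (u' j)
      rw [← hagree' j hj, hm2, hagree j hj]
    · simp [hub, hm1]
end

section
/- Let m be a Maltsev operation on a finite D, R ⊆ Dⁿ invariant under m, and suppose (i,a,b) ∈ Sig(R) is witnessed by (t_a, t_b) and (i,a,c) ∈ Sig(R) is witnessed by (t_a', t_c'). Then t_c := m(t_a, t_a', t_c') (coordinatewise) is in R and (t_b, t_c) witnesses (i,b,c) ∈ Sig(R). -/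
/-- If `(i,a,b)` is witnessed by `(t_a, t_b)` and `(i,a,c)` by `(t_a', t_c')` in a
relation invariant under a Maltsev operation `m`, then `t_c := m(t_a, t_a', t_c')`
lies in `R` and `(t_b, t_c)` witnesses `(i,b,c)`. -/
theorem stmt18 {D : Type*} [Fintype D] {n : ℕ} (m : D → D → D → D)
    (hm1 : ∀ x y, m x x y = y) (hm2 : ∀ x y, m x y y = x)
    (R : Set (Fin n → D))
    (hR : ∀ t1 t2 t3, t1 ∈ R → t2 ∈ R → t3 ∈ R →
      (fun c => m (t1 c) (t2 c) (t3 c)) ∈ R)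
    (i : Fin n) (a b c : D) (ta tb ta' tc' : Fin n → D)
    (hta : ta ∈ R) (htb : tb ∈ R) (hta' : ta' ∈ R) (htc' : tc' ∈ R)
    (hw1 : (∀ j, j < i → ta j = tb j) ∧ ta i = a ∧ tb i = b)
    (hw2 : (∀ j, j < i → ta' j = tc' j) ∧ ta' i = a ∧ tc' i = c) :
    (fun j => m (ta j) (ta' j) (tc' j)) ∈ R ∧
    (∀ j, j < i → tb j = m (ta j) (ta' j) (tc' j)) ∧
    tb i = b ∧ m (ta i) (ta' i) (tc' i) = c := by
  refine ⟨hR _ _ _ hta hta' htc', ?_, hw1.2.2, ?_⟩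
  · intro j hj
    rw [← hw2.1 j hj, hm2, hw1.1 j hj]
  · rw [hw1.2.1, hw2.2.1, hm1, hw2.2.2]
end
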